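/- arXiv:math/0112049 — 3 statements merged into one kernel-verified Lean document; each statement's English description precedes it below -/
import Mathlib

section
/- Let (Λ,d) be a k-graph satisfying the standing assumption (★) and fix 0 < r < 1. For x,y ∈ Λ^Δ the following are equivalent: (i) x ~_s y, i.e. ρ(σ^{je} x, σ^{je} y) → 0 as j → ∞; (ii) there exists m ∈ ℤ^k such that x(m,n) = y(m,n) for all n ≥ m; (iii) there exists m ∈ ℕ^k such that π(σ^m x) = π(σ^m y). Similarly, x ~_u y (i.e. ρ(σ^{−je} x, σ^{−je} y) → 0 as j → ∞) if and only if there exists n ∈ ℤ^k such that x(m,n) = y(m,n) for all m ≤ n. -/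
open scoped Classical
open TopologicalSpace MeasureTheory

/-- A `k`-graph: a countable small category with a degree functor to `ℕ^k`
satisfying the unique factorisation property.  Objects are identified with
the degree-zero morphisms. -/
structure KGraph (k : ℕ) where
  Mor : Type
  countable : Countable Mor
  src : Mor → Mor
  rng : Mor → Mor
  deg : Mor → Fin k → ℕ
  comp : (lam mu : Mor) → src lam = rng mu → Mor
  deg_src : ∀ lam, deg (src lam) = 0
  deg_rng : ∀ lam, deg (rng lam) = 0
  src_obj : ∀ v, deg v = 0 → src v = v
  rng_obj : ∀ v, deg v = 0 → rng v = v
  src_comp : ∀ lam mu h, src (comp lam mu h) = src mu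
  rng_comp : ∀ lam mu h, rng (comp lam mu h) = rng lam
  deg_comp : ∀ lam mu h, deg (comp lam mu h) = deg lam + deg mu
  id_comp : ∀ lam (h : src (rng lam) = rng lam), comp (rng lam) lam h = lam
  comp_id : ∀ lam (h : src lam = rng (src lam)), comp lam (src lam) h = lam
  assoc : ∀ l m n (h1 : src l = rng m) (h2 : src m = rng n)
      (h3 : src (comp l m h1) = rng n) (h4 : src l = rng (comp m n h2)),
      comp (comp l m h1) n h3 = comp l (comp m n h2) h4
  factor : ∀ lam (n1 n2 : Fin k → ℕ), deg lam = n1 + n2 →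
      ∃! p : Mor × Mor, deg p.1 = n1 ∧ deg p.2 = n2 ∧
        ∃ h : src p.1 = rng p.2, comp p.1 p.2 h = lam

namespace KGraph

variable {k : ℕ}

/-- The vertices (objects) of a `k`-graph are the degree-zero morphisms. -/
def IsVertex (Λ : KGraph k) (v : Λ.Mor) : Prop := Λ.deg v = 0

/-- Standing assumption (★): for each `p ∈ ℕ^k` the restrictions of `r` and `s`
to `Λ^p` are surjective (onto the vertices) and finite-to-one. -/
def Star (Λ : KGraph k) : Prop :=
  ∀ p : Fin k → ℕ,
    (∀ v, Λ.IsVertex v →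
      (∃ lam, Λ.deg lam = p ∧ Λ.rng lam = v) ∧
      (∃ lam, Λ.deg lam = p ∧ Λ.src lam = v)) ∧
    (∀ v, Λ.IsVertex v →
      {lam | Λ.deg lam = p ∧ Λ.rng lam = v}.Finite ∧
      {lam | Λ.deg lam = p ∧ Λ.src lam = v}.Finite)

/-- Irreducibility (strong connectedness) of a `k`-graph. -/
def Irreducible (Λ : KGraph k) : Prop :=
  ∀ u v, Λ.IsVertex u → Λ.IsVertex v →
    ∃ lam, Λ.deg lam ≠ 0 ∧ Λ.rng lam = u ∧ Λ.src lam = v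

/-- Primitivity of a `k`-graph. -/
def Primitive (Λ : KGraph k) : Prop :=
  ∃ p : Fin k → ℕ, p ≠ 0 ∧ ∀ u v, Λ.IsVertex u → Λ.IsVertex v →
    ∃ lam, Λ.deg lam = p ∧ Λ.rng lam = u ∧ Λ.src lam = v

/-- The degree of a morphism, viewed in `ℤ^k`. -/
def degZ (Λ : KGraph k) (lam : Λ.Mor) : Fin k → ℤ := fun i => (Λ.deg lam i : ℤ)

/-- The number of morphisms of degree `p` with range `u` and source `v`. -/
noncomputable def count (Λ : KGraph k) (p : Fin k → ℕ) (u v : Λ.Mor) : ℕ :=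
  Nat.card {lam : Λ.Mor // Λ.deg lam = p ∧ Λ.rng lam = u ∧ Λ.src lam = v}

end KGraph

/-- A two-sided infinite path in a `k`-graph: a degree-preserving functor from
the `k`-graph `Δ = {(m,n) ∈ ℤ^k × ℤ^k : m ≤ n}` to `Λ`. -/
structure TwoSidedPath {k : ℕ} (Λ : KGraph k) where
  toFun : ∀ m n : Fin k → ℤ, m ≤ n → Λ.Mor
  deg_eq : ∀ m n (h : m ≤ n) (i : Fin k), (Λ.deg (toFun m n h) i : ℤ) = n i - m i
  src_eq : ∀ m n (h : m ≤ n), Λ.src (toFun m n h) = toFun n n le_rfl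
  rng_eq : ∀ m n (h : m ≤ n), Λ.rng (toFun m n h) = toFun m m le_rfl
  comp_eq : ∀ l m n (h1 : l ≤ m) (h2 : m ≤ n),
      Λ.comp (toFun l m h1) (toFun m n h2)
        ((src_eq l m h1).trans (rng_eq m n h2).symm) = toFun l n (h1.trans h2)

/-- A one-sided infinite path in a `k`-graph: a degree-preserving functor from
the `k`-graph `Ω = {(m,n) ∈ ℕ^k × ℕ^k : m ≤ n}` to `Λ`. -/
structure OneSidedPath {k : ℕ} (Λ : KGraph k) where
  toFun : ∀ m n : Fin k → ℕ, m ≤ n → Λ.Mor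
  deg_eq : ∀ m n (h : m ≤ n) (i : Fin k), Λ.deg (toFun m n h) i = n i - m i
  src_eq : ∀ m n (h : m ≤ n), Λ.src (toFun m n h) = toFun n n le_rfl
  rng_eq : ∀ m n (h : m ≤ n), Λ.rng (toFun m n h) = toFun m m le_rfl
  comp_eq : ∀ l m n (h1 : l ≤ m) (h2 : m ≤ n),
      Λ.comp (toFun l m h1) (toFun m n h2)
        ((src_eq l m h1).trans (rng_eq m n h2).symm) = toFun l n (h1.trans h2)

namespace TwoSidedPath

variable {k : ℕ} {Λ : KGraph k}

theorem toFun_congr (x : TwoSidedPath Λ) {m n m' n' : Fin k → ℤ}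
    (hm : m = m') (hn : n = n') (h : m ≤ n) (h' : m' ≤ n') :
    x.toFun m n h = x.toFun m' n' h' := by subst hm; subst hn; rfl

/-- The vertex `x(0)` of a two-sided path. -/
def obj0 (x : TwoSidedPath Λ) : Λ.Mor := x.toFun 0 0 le_rfl

end TwoSidedPath

theorem le_add_degZ {k : ℕ} (Λ : KGraph k) (n : Fin k → ℤ) (lam : Λ.Mor) :
    n ≤ n + Λ.degZ lam :=
  Pi.le_def.mpr fun i => by
    show n i ≤ n i + (Λ.deg lam i : ℤ); omega

/-- The cylinder set `Z(λ, n) = {x ∈ Λ^Δ : x(n, n + d(λ)) = λ}`. -/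
def ZCyl {k : ℕ} (Λ : KGraph k) (lam : Λ.Mor) (n : Fin k → ℤ) :
    Set (TwoSidedPath Λ) :=
  {x | x.toFun n (n + Λ.degZ lam) (le_add_degZ Λ n lam) = lam}

/-- The topology on `Λ^Δ` generated by the cylinder sets. -/
instance {k : ℕ} (Λ : KGraph k) : TopologicalSpace (TwoSidedPath Λ) :=
  TopologicalSpace.generateFrom {S | ∃ lam n, S = ZCyl Λ lam n}

noncomputable instance {k : ℕ} (Λ : KGraph k) : MeasurableSpace (TwoSidedPath Λ) :=
  borel _

/-- The one-sided cylinder set `Z(λ) = {x ∈ Λ^Ω : x(0, d(λ)) = λ}`. -/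
def OCyl {k : ℕ} (Λ : KGraph k) (lam : Λ.Mor) : Set (OneSidedPath Λ) :=
  {x | x.toFun 0 (Λ.deg lam) (Pi.le_def.mpr fun _ => Nat.zero_le _) = lam}

/-- The topology on `Λ^Ω` generated by the cylinder sets. -/
instance {k : ℕ} (Λ : KGraph k) : TopologicalSpace (OneSidedPath Λ) :=
  TopologicalSpace.generateFrom {S | ∃ lam, S = OCyl Λ lam}

/-- The shift `σ^n` on the two-sided path space, for `n ∈ ℤ^k`. -/
def TwoSidedPath.shift {k : ℕ} {Λ : KGraph k} (n : Fin k → ℤ)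
    (x : TwoSidedPath Λ) : TwoSidedPath Λ where
  toFun l m h := x.toFun (l + n) (m + n) (add_le_add_left h n)
  deg_eq l m h i := by
    show (Λ.deg (x.toFun (l + n) (m + n) (add_le_add_left h n)) i : ℤ) = m i - l i
    have h' := x.deg_eq (l + n) (m + n) (add_le_add_left h n) i
    simp only [Pi.add_apply] at h'
    omega
  src_eq l m h := x.src_eq (l + n) (m + n) (add_le_add_left h n)
  rng_eq l m h := x.rng_eq (l + n) (m + n) (add_le_add_left h n)
  comp_eq l m m' h1 h2 :=
    x.comp_eq (l + n) (m + n) (m' + n) (add_le_add_left h1 n) (add_le_add_left h2 n)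

/-- The shift `σ^p` on the one-sided path space, for `p ∈ ℕ^k`. -/
def OneSidedPath.shift {k : ℕ} {Λ : KGraph k} (p : Fin k → ℕ)
    (x : OneSidedPath Λ) : OneSidedPath Λ where
  toFun l m h := x.toFun (l + p) (m + p) (add_le_add_left h p)
  deg_eq l m h i := by
    show Λ.deg (x.toFun (l + p) (m + p) (add_le_add_left h p)) i = m i - l i
    have h' := x.deg_eq (l + p) (m + p) (add_le_add_left h p) i
    simp only [Pi.add_apply] at h'
    omega
  src_eq l m h := x.src_eq (l + p) (m + p) (add_le_add_left h p)
  rng_eq l m h := x.rng_eq (l + p) (m + p) (add_le_add_left h p)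
  comp_eq l m m' h1 h2 :=
    x.comp_eq (l + p) (m + p) (m' + p) (add_le_add_left h1 p) (add_le_add_left h2 p)

/-- The vector `(j, …, j) ∈ ℤ^k`, i.e. `j·e` where `e = (1,…,1)`. -/
def jvecZ (k : ℕ) (j : ℕ) : Fin k → ℤ := fun _ => (j : ℤ)

theorem neg_jvecZ_le (k j : ℕ) : -(jvecZ k j) ≤ jvecZ k j :=
  Pi.le_def.mpr fun _ => by show -((j : ℤ)) ≤ (j : ℤ); omega

/-- Coercion `ℕ^k → ℤ^k`. -/
def coeZ {k : ℕ} (p : Fin k → ℕ) : Fin k → ℤ := fun i => (p i : ℤ)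

theorem coeZ_le_coeZ {k : ℕ} {m n : Fin k → ℕ} (h : m ≤ n) : coeZ m ≤ coeZ n :=
  Pi.le_def.mpr fun i => by
    show ((m i : ℤ)) ≤ (n i : ℤ)
    exact_mod_cast Pi.le_def.mp h i

theorem neg_coeZ_le {k : ℕ} (m : Fin k → ℕ) : -(coeZ m) ≤ coeZ m :=
  Pi.le_def.mpr fun i => by show -((m i : ℤ)) ≤ (m i : ℤ); omega

/-- The quantity `h(x,y) ∈ ℕ∞`:  `0` if `x(0) ≠ y(0)`, and otherwise
`1 + sup { j : x(-je, je) = y(-je, je) }`. -/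
noncomputable def hdist {k : ℕ} {Λ : KGraph k} (x y : TwoSidedPath Λ) : ℕ∞ :=
  if x.obj0 = y.obj0 then
    1 + sSup {c : ℕ∞ | ∃ j : ℕ, c = (j : ℕ∞) ∧
        x.toFun (-(jvecZ k j)) (jvecZ k j) (neg_jvecZ_le k j) =
        y.toFun (-(jvecZ k j)) (jvecZ k j) (neg_jvecZ_le k j)}
  else 0

/-- The metric `ρ(x,y) = r^{h(x,y)}`, with `r^∞ = 0`. -/
noncomputable def rho {k : ℕ} {Λ : KGraph k} (r : ℝ) (x y : TwoSidedPath Λ) : ℝ :=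
  if hdist x y = ⊤ then 0 else r ^ (hdist x y).toNat

/-- The local contracting set `E_x`. -/
def Ex {k : ℕ} {Λ : KGraph k} (x : TwoSidedPath Λ) : Set (TwoSidedPath Λ) :=
  {y | ∀ m n (h : m ≤ n), 0 ≤ m → y.toFun m n h = x.toFun m n h}

/-- The local expanding set `F_x`. -/
def Fx {k : ℕ} {Λ : KGraph k} (x : TwoSidedPath Λ) : Set (TwoSidedPath Λ) :=
  {y | ∀ m n (h : m ≤ n), n ≤ 0 → y.toFun m n h = x.toFun m n h}

/-- The restriction map `π : Λ^Δ → Λ^Ω`. -/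
def TwoSidedPath.restrict {k : ℕ} {Λ : KGraph k} (x : TwoSidedPath Λ) :
    OneSidedPath Λ where
  toFun m n h := x.toFun (coeZ m) (coeZ n) (coeZ_le_coeZ h)
  deg_eq m n h i := by
    show Λ.deg (x.toFun (coeZ m) (coeZ n) (coeZ_le_coeZ h)) i = n i - m i
    have h' := x.deg_eq (coeZ m) (coeZ n) (coeZ_le_coeZ h) i
    simp only [coeZ] at h'
    omega
  src_eq m n h := x.src_eq (coeZ m) (coeZ n) (coeZ_le_coeZ h)
  rng_eq m n h := x.rng_eq (coeZ m) (coeZ n) (coeZ_le_coeZ h)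
  comp_eq l m n h1 h2 :=
    x.comp_eq (coeZ l) (coeZ m) (coeZ n) (coeZ_le_coeZ h1) (coeZ_le_coeZ h2)

/-- Stable equivalence: `x ∼ₛ y` iff the two paths eventually agree to the right. -/
def SRel {k : ℕ} {Λ : KGraph k} (x y : TwoSidedPath Λ) : Prop :=
  ∃ m : Fin k → ℤ, ∀ n (h : m ≤ n), x.toFun m n h = y.toFun m n h

/-- Unstable equivalence: `x ∼ᵤ y` iff the two paths eventually agree to the left. -/
def URel {k : ℕ} {Λ : KGraph k} (x y : TwoSidedPath Λ) : Prop :=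
  ∃ n : Fin k → ℤ, ∀ m (h : m ≤ n), x.toFun m n h = y.toFun m n h

/-- Asymptotic equivalence: `x ∼ₐ y` iff `x ∼ₛ y` and `x ∼ᵤ y`. -/
def ARel {k : ℕ} {Λ : KGraph k} (x y : TwoSidedPath Λ) : Prop :=
  ∃ m : Fin k → ℕ, ∀ n : Fin k → ℤ, coeZ m ≤ n →
    (∀ h : coeZ m ≤ n, x.toFun (coeZ m) n h = y.toFun (coeZ m) n h) ∧
    (∀ h' : -n ≤ -(coeZ m), x.toFun (-n) (-(coeZ m)) h' = y.toFun (-n) (-(coeZ m)) h')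

/-- The groupoid `G_{s,m}` of pairs agreeing from `m ∈ ℤ^k` onwards. -/
def Gsm {k : ℕ} (Λ : KGraph k) (m : Fin k → ℤ) :
    Set (TwoSidedPath Λ × TwoSidedPath Λ) :=
  {p | ∀ n (h : m ≤ n), p.1.toFun m n h = p.2.toFun m n h}

theorem TwoSidedPath.self_mem_cyl {k : ℕ} {Λ : KGraph k} (x : TwoSidedPath Λ)
    (m n : Fin k → ℤ) (h : m ≤ n) : x ∈ ZCyl Λ (x.toFun m n h) m := by
  show x.toFun m (m + Λ.degZ (x.toFun m n h)) _ = x.toFun m n h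
  apply x.toFun_congr rfl
  funext i
  show m i + (Λ.deg (x.toFun m n h) i : ℤ) = n i
  have h' := x.deg_eq m n h i
  omega

theorem degZ_obj0 {k : ℕ} {Λ : KGraph k} (x : TwoSidedPath Λ) :
    Λ.degZ x.obj0 = 0 := by
  funext i
  show (Λ.deg (x.toFun 0 0 le_rfl) i : ℤ) = 0
  have h' := x.deg_eq 0 0 le_rfl i
  simp only [Pi.zero_apply] at h'
  omega

theorem mem_vertex_cyl {k : ℕ} {Λ : KGraph k} {x z : TwoSidedPath Λ}
    (hz : z ∈ ZCyl Λ x.obj0 0) : z.obj0 = x.obj0 := by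
  have h0 : (0 : Fin k → ℤ) = 0 + Λ.degZ x.obj0 := by rw [degZ_obj0]; simp
  calc z.obj0 = z.toFun 0 (0 + Λ.degZ x.obj0) (le_add_degZ Λ 0 x.obj0) :=
        z.toFun_congr rfl h0 le_rfl (le_add_degZ Λ 0 x.obj0)
    _ = x.obj0 := hz


/-! By unique factorisation, two paths that agree on a segment `[m, n]` agree on every
subsegment, and agreement on `[l, m]` and on `[m, n]` glues to agreement on `[l, n]`.
Since `ρ(x, y) < r ^ N` exactly when `x` and `y` agree on the window `[-N e, N e]`,
`ρ(σ^{je} x, σ^{je} y) → 0` says that `x` and `y` eventually agree on every unit diagonal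
step `[c e, (c + 1) e]`; gluing these steps, this is the same as agreeing on `[m, n]` for all
`n` beyond some `m`, and the one-sided formulation is that statement with `m ∈ ℕ^k`.
The unstable case is the mirror image under `j ↦ -j`. -/

namespace KGraph

variable {k : ℕ}

theorem comp_congr (Λ : KGraph k) {a a' b b' : Λ.Mor} (ha : a = a') (hb : b = b')
    (h : Λ.src a = Λ.rng b) (h' : Λ.src a' = Λ.rng b') :
    Λ.comp a b h = Λ.comp a' b' h' := by
  subst ha hb
  rfl

theorem eq_and_eq_of_comp_eq (Λ : KGraph k) {a b a' b' : Λ.Mor}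
    (ha : Λ.deg a = Λ.deg a') (hb : Λ.deg b = Λ.deg b')
    (h : Λ.src a = Λ.rng b) (h' : Λ.src a' = Λ.rng b')
    (heq : Λ.comp a b h = Λ.comp a' b' h') : a = a' ∧ b = b' := by
  obtain ⟨p, -, huniq⟩ := Λ.factor (Λ.comp a b h) (Λ.deg a) (Λ.deg b) (Λ.deg_comp a b h)
  have e := (huniq (a, b) ⟨rfl, rfl, h, rfl⟩).trans
    (huniq (a', b') ⟨ha.symm, hb.symm, h', heq.symm⟩).symm
  exact Prod.ext_iff.mp e

end KGraph

theorem OneSidedPath.ext {k : ℕ} {Λ : KGraph k} {x y : OneSidedPath Λ}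
    (h : x.toFun = y.toFun) : x = y := by
  cases x
  cases y
  cases h
  rfl

theorem natCast_lt_one_add_sSup_iff {P : ℕ → Prop} (hP : ∀ i j, i ≤ j → P j → P i)
    (h0 : P 0) (j : ℕ) :
    (j : ℕ∞) < 1 + sSup {c : ℕ∞ | ∃ i : ℕ, c = i ∧ P i} ↔ P j := by
  cases j with
  | zero => simpa using h0
  | succ i =>
    rw [Nat.cast_succ, add_comm, ENat.add_lt_add_iff_left ENat.one_ne_top, lt_sSup_iff]
    constructor
    · rintro ⟨_, ⟨i', rfl, hi'⟩, hlt⟩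
      exact hP _ i' (by exact_mod_cast hlt) hi'
    · exact fun h => ⟨_, ⟨i + 1, rfl, h⟩, by exact_mod_cast i.lt_succ_self⟩

theorem tendsto_zero_iff_forall_eventually_lt_pow {α : Type*} {l : Filter α} {u : α → ℝ}
    (hu : ∀ a, 0 ≤ u a) {r : ℝ} (hr0 : 0 < r) (hr1 : r < 1) :
    Filter.Tendsto u l (nhds 0) ↔ ∀ N : ℕ, ∀ᶠ a in l, u a < r ^ N := by
  refine ⟨fun h N => h.eventually (gt_mem_nhds (pow_pos hr0 N)), fun h => ?_⟩
  refine tendsto_order.2 ⟨fun b hb => .of_forall fun a => hb.trans_le (hu a), fun ε hε => ?_⟩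
  obtain ⟨N, hN⟩ := exists_pow_lt_of_lt_one hε hr1
  exact (h N).mono fun a ha => ha.trans hN

theorem jvecZ_mono (k : ℕ) {i j : ℕ} (hij : i ≤ j) : jvecZ k i ≤ jvecZ k j :=
  fun _ => show (i : ℤ) ≤ j by exact_mod_cast hij

-- `((c : ℤ) : Fin k → ℤ)` is the constant vector `c e`.
theorem intCast_le_intCast_add_one (k : ℕ) (c : ℤ) :
    (c : Fin k → ℤ) ≤ ((c + 1 : ℤ) : Fin k → ℤ) :=
  Int.cast_mono (lt_add_one c).le

theorem exists_le_intCast {k : ℕ} (n : Fin k → ℤ) : ∃ J : ℤ, n ≤ (J : Fin k → ℤ) := by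
  obtain ⟨J, hJ⟩ := (Set.finite_range n).bddAbove
  exact ⟨J, fun i => hJ ⟨i, rfl⟩⟩

theorem exists_intCast_le {k : ℕ} (n : Fin k → ℤ) : ∃ J : ℤ, (J : Fin k → ℤ) ≤ n := by
  obtain ⟨J, hJ⟩ := (Set.finite_range n).bddBelow
  exact ⟨J, fun i => hJ ⟨i, rfl⟩⟩

namespace TwoSidedPath

variable {k : ℕ} {Λ : KGraph k}

theorem deg_toFun_eq (x y : TwoSidedPath Λ) {m n : Fin k → ℤ} (h : m ≤ n) :
    Λ.deg (x.toFun m n h) = Λ.deg (y.toFun m n h) :=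
  funext fun i => by exact_mod_cast (x.deg_eq m n h i).trans (y.deg_eq m n h i).symm

def AgreeBetween (x y : TwoSidedPath Λ) (m n : Fin k → ℤ) : Prop :=
  ∃ h : m ≤ n, x.toFun m n h = y.toFun m n h

variable {x y : TwoSidedPath Λ} {l m n a b : Fin k → ℤ}

theorem AgreeBetween.eq (hxy : x.AgreeBetween y m n) (h : m ≤ n) :
    x.toFun m n h = y.toFun m n h := hxy.2

theorem agreeBetween_iff_eq (h : m ≤ n) :
    x.AgreeBetween y m n ↔ x.toFun m n h = y.toFun m n h :=
  ⟨fun hxy => hxy.eq h, fun e => ⟨h, e⟩⟩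

theorem agreeBetween_iff_of_le (hlm : l ≤ m) (hmn : m ≤ n) :
    x.AgreeBetween y l n ↔ x.AgreeBetween y l m ∧ x.AgreeBetween y m n := by
  constructor
  · rintro ⟨_, hxy⟩
    rw [← x.comp_eq l m n hlm hmn, ← y.comp_eq l m n hlm hmn] at hxy
    obtain ⟨hl, hr⟩ := Λ.eq_and_eq_of_comp_eq (deg_toFun_eq x y hlm)
      (deg_toFun_eq x y hmn) _ _ hxy
    exact ⟨⟨hlm, hl⟩, ⟨hmn, hr⟩⟩
  · rintro ⟨⟨_, hl⟩, ⟨_, hr⟩⟩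
    refine ⟨hlm.trans hmn, ?_⟩
    rw [← x.comp_eq l m n hlm hmn, ← y.comp_eq l m n hlm hmn]
    exact Λ.comp_congr hl hr _ _

theorem AgreeBetween.mono (hxy : x.AgreeBetween y m n) (hma : m ≤ a) (hab : a ≤ b)
    (hbn : b ≤ n) : x.AgreeBetween y a b :=
  ((agreeBetween_iff_of_le hma hab).mp
    ((agreeBetween_iff_of_le (hma.trans hab) hbn).mp hxy).1).2

theorem agreeBetween_of_forall_succ {a b : ℤ} (hab : a ≤ b)
    (h : ∀ c : ℤ, a ≤ c → c ≤ b → x.AgreeBetween y (c : Fin k → ℤ) ((c + 1 : ℤ) : Fin k → ℤ)) :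
    x.AgreeBetween y (a : Fin k → ℤ) (b : Fin k → ℤ) := by
  induction b, hab using Int.leInduction with
  | base => exact (h a le_rfl le_rfl).mono le_rfl le_rfl (intCast_le_intCast_add_one k a)
  | succ b hab ih =>
    refine (agreeBetween_iff_of_le (Int.cast_mono hab) (intCast_le_intCast_add_one k b)).mpr
      ⟨ih fun c hac hcb => h c hac (by omega), h b hab (by omega)⟩

theorem sRel_iff_exists_forall_agreeBetween_succ :
    SRel x y ↔ ∃ J : ℤ, ∀ c : ℤ, J ≤ c →
      x.AgreeBetween y (c : Fin k → ℤ) ((c + 1 : ℤ) : Fin k → ℤ) := by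
  constructor
  · rintro ⟨m, hm⟩
    obtain ⟨J, hJ⟩ := exists_le_intCast m
    refine ⟨J, fun c hc => ?_⟩
    have hmc : m ≤ (c : Fin k → ℤ) := hJ.trans (Int.cast_mono hc)
    have hc1 := intCast_le_intCast_add_one k c
    exact AgreeBetween.mono ⟨_, hm _ (hmc.trans hc1)⟩ hmc hc1 le_rfl
  · rintro ⟨J, hJ⟩
    refine ⟨J, fun n hn => ?_⟩
    obtain ⟨b, hb⟩ := exists_le_intCast n
    have hJb := agreeBetween_of_forall_succ (le_max_left J b) fun c hc _ => hJ c hc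
    exact (hJb.mono le_rfl hn (hb.trans (Int.cast_mono (le_max_right J b)))).eq hn

theorem uRel_iff_exists_forall_agreeBetween_succ :
    URel x y ↔ ∃ J : ℤ, ∀ c : ℤ, c ≤ J →
      x.AgreeBetween y (c : Fin k → ℤ) ((c + 1 : ℤ) : Fin k → ℤ) := by
  constructor
  · rintro ⟨n, hn⟩
    obtain ⟨J, hJ⟩ := exists_intCast_le n
    refine ⟨J - 1, fun c hc => ?_⟩
    have hc1 := intCast_le_intCast_add_one k c
    have hcn : ((c + 1 : ℤ) : Fin k → ℤ) ≤ n := (Int.cast_mono (by omega)).trans hJ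
    exact AgreeBetween.mono ⟨_, hn _ (hc1.trans hcn)⟩ le_rfl hc1 hcn
  · rintro ⟨J, hJ⟩
    refine ⟨J, fun m hm => ?_⟩
    obtain ⟨a, ha⟩ := exists_intCast_le m
    have haJ := agreeBetween_of_forall_succ (min_le_right a J) fun c _ hc => hJ c hc
    exact (haJ.mono ((Int.cast_mono (min_le_left a J)).trans ha) hm le_rfl).eq hm

theorem agreeBetween_shift_iff (p : Fin k → ℤ) :
    (x.shift p).AgreeBetween (y.shift p) m n ↔ x.AgreeBetween y (m + p) (n + p) :=
  ⟨fun ⟨h, e⟩ => ⟨add_le_add_left h p, e⟩, fun ⟨h, e⟩ => ⟨le_of_add_le_add_right h, e⟩⟩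

theorem agreeBetween_shift_jvecZ_window_iff (j N : ℕ) :
    (x.shift (jvecZ k j)).AgreeBetween (y.shift (jvecZ k j)) (-jvecZ k N) (jvecZ k N) ↔
      x.AgreeBetween y ((j - N : ℤ) : Fin k → ℤ) ((j + N : ℤ) : Fin k → ℤ) := by
  rw [agreeBetween_shift_iff]
  congr! 1 <;> ext <;> simp [jvecZ] <;> ring

theorem agreeBetween_shift_neg_jvecZ_window_iff (j N : ℕ) :
    (x.shift (-jvecZ k j)).AgreeBetween (y.shift (-jvecZ k j)) (-jvecZ k N) (jvecZ k N) ↔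
      x.AgreeBetween y ((-j - N : ℤ) : Fin k → ℤ) ((-j + N : ℤ) : Fin k → ℤ) := by
  rw [agreeBetween_shift_iff]
  congr! 1 <;> ext <;> simp [jvecZ] <;> ring

theorem restrict_shift_eq_iff (p : Fin k → ℕ) :
    (x.shift (coeZ p)).restrict = (y.shift (coeZ p)).restrict ↔
      ∀ n, coeZ p ≤ n → x.AgreeBetween y (coeZ p) n := by
  constructor
  · intro h n hn
    set b : Fin k → ℕ := fun i => (n i - p i).toNat
    have h0 : coeZ (0 : Fin k → ℕ) + coeZ p = coeZ p := funext fun i => by simp [coeZ]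
    have hb : coeZ b + coeZ p = n := funext fun i => by
      have := hn i
      simp only [coeZ, Pi.add_apply, b] at this ⊢
      omega
    have e : x.AgreeBetween y (coeZ 0 + coeZ p) (coeZ b + coeZ p) :=
      ⟨_, congrArg (fun z : OneSidedPath Λ => z.toFun 0 b fun i => Nat.zero_le (b i)) h⟩
    rwa [h0, hb] at e
  · intro h
    refine OneSidedPath.ext (funext fun a => funext fun b => funext fun hab => ?_)
    have hpa : coeZ p ≤ coeZ a + coeZ p := le_add_of_nonneg_left fun i => Int.natCast_nonneg (a i)
    have hab' : coeZ a + coeZ p ≤ coeZ b + coeZ p := add_le_add_left (coeZ_le_coeZ hab) _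
    exact ((h _ (hpa.trans hab')).mono hpa hab' le_rfl).eq _

theorem sRel_iff_exists_restrict_shift_eq :
    SRel x y ↔ ∃ p : Fin k → ℕ, (x.shift (coeZ p)).restrict = (y.shift (coeZ p)).restrict := by
  simp only [restrict_shift_eq_iff]
  constructor
  · rintro ⟨m, hm⟩
    have hmp : m ≤ coeZ (fun i => (m i).toNat) := fun i => Int.self_le_toNat (m i)
    exact ⟨_, fun n hn => AgreeBetween.mono ⟨_, hm n (hmp.trans hn)⟩ hmp hn le_rfl⟩
  · rintro ⟨p, hp⟩
    exact ⟨coeZ p, fun n hn => (hp n hn).eq hn⟩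

theorem agreeBetween_window_zero_iff :
    x.AgreeBetween y (-jvecZ k 0) (jvecZ k 0) ↔ x.obj0 = y.obj0 := by
  have h0 : jvecZ k 0 = 0 := funext fun _ => rfl
  rw [h0, neg_zero]
  exact ⟨fun h => h.eq le_rfl, fun h => ⟨le_rfl, h⟩⟩

theorem AgreeBetween.window_mono {i j : ℕ} (hij : i ≤ j)
    (h : x.AgreeBetween y (-jvecZ k j) (jvecZ k j)) :
    x.AgreeBetween y (-jvecZ k i) (jvecZ k i) :=
  h.mono (neg_le_neg (jvecZ_mono k hij)) (neg_jvecZ_le k i) (jvecZ_mono k hij)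

end TwoSidedPath

section Metric

variable {k : ℕ} {Λ : KGraph k} {x y : TwoSidedPath Λ} {r : ℝ}

open TwoSidedPath

theorem natCast_lt_hdist_iff (j : ℕ) :
    (j : ℕ∞) < hdist x y ↔ x.AgreeBetween y (-jvecZ k j) (jvecZ k j) := by
  unfold hdist
  split_ifs with h0
  · simp_rw [← agreeBetween_iff_eq]
    exact natCast_lt_one_add_sSup_iff (fun _ _ hij h => h.window_mono hij)
      (agreeBetween_window_zero_iff.mpr h0) j
  · simp only [not_lt_zero, false_iff]
    exact fun h => h0 (agreeBetween_window_zero_iff.mp (h.window_mono (Nat.zero_le j)))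

theorem rho_nonneg (hr : 0 ≤ r) (x y : TwoSidedPath Λ) : 0 ≤ rho r x y := by
  unfold rho
  split_ifs
  exacts [le_rfl, pow_nonneg hr _]

theorem rho_lt_pow_iff (hr0 : 0 < r) (hr1 : r < 1) (j : ℕ) :
    rho r x y < r ^ j ↔ (j : ℕ∞) < hdist x y := by
  unfold rho
  split_ifs with htop
  · simp [htop, pow_pos hr0]
  · lift hdist x y to ℕ using htop with d
    simp [pow_lt_pow_iff_right_of_lt_one₀ hr0 hr1]

theorem tendsto_rho_zero_iff (hr0 : 0 < r) (hr1 : r < 1) {α : Type*} {l : Filter α}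
    {f g : α → TwoSidedPath Λ} :
    Filter.Tendsto (fun a => rho r (f a) (g a)) l (nhds 0) ↔
      ∀ N : ℕ, ∀ᶠ a in l, (f a).AgreeBetween (g a) (-jvecZ k N) (jvecZ k N) := by
  simp only [tendsto_zero_iff_forall_eventually_lt_pow (fun _ => rho_nonneg hr0.le _ _) hr0 hr1,
    rho_lt_pow_iff hr0 hr1, natCast_lt_hdist_iff]

theorem tendsto_rho_shift_iff_sRel (hr0 : 0 < r) (hr1 : r < 1) :
    Filter.Tendsto (fun j : ℕ => rho r (x.shift (jvecZ k j)) (y.shift (jvecZ k j)))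
      Filter.atTop (nhds 0) ↔ SRel x y := by
  simp only [tendsto_rho_zero_iff hr0 hr1, agreeBetween_shift_jvecZ_window_iff,
    sRel_iff_exists_forall_agreeBetween_succ]
  constructor
  · intro h
    obtain ⟨J, hJ⟩ := Filter.eventually_atTop.mp (h 1)
    refine ⟨J, fun c hc => ?_⟩
    obtain ⟨j, rfl⟩ := Int.eq_ofNat_of_zero_le (by omega : 0 ≤ c)
    exact (hJ j (by omega)).mono (Int.cast_mono (by omega)) (Int.cast_mono (by omega))
      (Int.cast_mono (by omega))
  · rintro ⟨J, hJ⟩ N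
    refine Filter.eventually_atTop.mpr ⟨(J + N).toNat, fun j hj => ?_⟩
    exact agreeBetween_of_forall_succ (by omega) fun c hc _ => hJ c (by omega)

theorem tendsto_rho_shift_neg_iff_uRel (hr0 : 0 < r) (hr1 : r < 1) :
    Filter.Tendsto (fun j : ℕ => rho r (x.shift (-jvecZ k j)) (y.shift (-jvecZ k j)))
      Filter.atTop (nhds 0) ↔ URel x y := by
  simp only [tendsto_rho_zero_iff hr0 hr1, agreeBetween_shift_neg_jvecZ_window_iff,
    uRel_iff_exists_forall_agreeBetween_succ]
  constructor
  · intro h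
    obtain ⟨J, hJ⟩ := Filter.eventually_atTop.mp (h 1)
    refine ⟨-J - 1, fun c hc => ?_⟩
    obtain ⟨j, hj⟩ := Int.eq_ofNat_of_zero_le (by omega : 0 ≤ -c - 1)
    exact (hJ j (by omega)).mono (Int.cast_mono (by omega)) (Int.cast_mono (by omega))
      (Int.cast_mono (by omega))
  · rintro ⟨J, hJ⟩ N
    refine Filter.eventually_atTop.mpr ⟨(N - J).toNat, fun j hj => ?_⟩
    exact agreeBetween_of_forall_succ (by omega) fun c _ hc => hJ c (by omega)

end Metric

theorem stable_unstable_characterisation_general {k : ℕ} (Λ : KGraph k)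
    (r : ℝ) (hr0 : 0 < r) (hr1 : r < 1)
    (x y : TwoSidedPath Λ) :
    ((Filter.Tendsto (fun j : ℕ =>
        rho r (TwoSidedPath.shift (jvecZ k j) x) (TwoSidedPath.shift (jvecZ k j) y))
        Filter.atTop (nhds 0)) ↔ SRel x y) ∧
    (SRel x y ↔ ∃ m : Fin k → ℕ,
      (TwoSidedPath.shift (coeZ m) x).restrict =
        (TwoSidedPath.shift (coeZ m) y).restrict) ∧
    ((Filter.Tendsto (fun j : ℕ =>
        rho r (TwoSidedPath.shift (-(jvecZ k j)) x)
          (TwoSidedPath.shift (-(jvecZ k j)) y))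
        Filter.atTop (nhds 0)) ↔ URel x y) :=
  ⟨tendsto_rho_shift_iff_sRel hr0 hr1, TwoSidedPath.sRel_iff_exists_restrict_shift_eq,
    tendsto_rho_shift_neg_iff_uRel hr0 hr1⟩

/-- Characterisation of the stable and unstable relations:
`x ∼ₛ y` iff `ρ(σ^{je} x, σ^{je} y) → 0` iff the paths agree from some
`m ∈ ℤ^k` to the right iff `π(σ^m x) = π(σ^m y)` for some `m ∈ ℕ^k`;
and `x ∼ᵤ y` iff `ρ(σ^{-je} x, σ^{-je} y) → 0`. -/
theorem stable_unstable_characterisation {k : ℕ} (hk : 0 < k) (Λ : KGraph k)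
    (hstar : Λ.Star) (r : ℝ) (hr0 : 0 < r) (hr1 : r < 1)
    (x y : TwoSidedPath Λ) :
    ((Filter.Tendsto (fun j : ℕ =>
        rho r (TwoSidedPath.shift (jvecZ k j) x) (TwoSidedPath.shift (jvecZ k j) y))
        Filter.atTop (nhds 0)) ↔ SRel x y) ∧
    (SRel x y ↔ ∃ m : Fin k → ℕ,
      (TwoSidedPath.shift (coeZ m) x).restrict =
        (TwoSidedPath.shift (coeZ m) y).restrict) ∧
    ((Filter.Tendsto (fun j : ℕ =>
        rho r (TwoSidedPath.shift (-(jvecZ k j)) x)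
          (TwoSidedPath.shift (-(jvecZ k j)) y))
        Filter.atTop (nhds 0)) ↔ URel x y) :=
  stable_unstable_characterisation_general Λ r hr0 hr1 x y
end

section
/- Let (Λ,d) be a k-graph satisfying the standing assumption (★). If Λ is primitive, then Λ⁰ is finite, and there exists N ∈ ℕ^k such that for all p ∈ ℕ^k with p ≥ N and every u,v ∈ Λ⁰ there exists λ ∈ Λ^p with r(λ) = u and s(λ) = v. -/
open scoped Classical
open TopologicalSpace MeasureTheory

namespace KGraph

variable {k : ℕ} (Λ : KGraph k)

def ConnectsIn (p : Fin k → ℕ) : Prop :=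
  ∀ u v, Λ.IsVertex u → Λ.IsVertex v →
    ∃ lam, Λ.deg lam = p ∧ Λ.rng lam = u ∧ Λ.src lam = v

variable {Λ}

theorem finite_setOf_isVertex_of_connectsIn {p : Fin k → ℕ} (hp : Λ.ConnectsIn p)
    (hfin : ∀ u, Λ.IsVertex u → {lam | Λ.deg lam = p ∧ Λ.rng lam = u}.Finite) :
    {v : Λ.Mor | Λ.IsVertex v}.Finite := by
  rcases {v : Λ.Mor | Λ.IsVertex v}.eq_empty_or_nonempty with hempty | ⟨u, hu⟩
  · exact hempty ▸ Set.finite_empty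
  · refine ((hfin u hu).image Λ.src).subset fun v hv => ?_
    obtain ⟨lam, hdeg, hrng, hsrc⟩ := hp u v hu hv
    exact ⟨lam, ⟨hdeg, hrng⟩, hsrc⟩

theorem ConnectsIn.add {p m : Fin k → ℕ} (hp : Λ.ConnectsIn p)
    (hsurj : ∀ v, Λ.IsVertex v → ∃ mu, Λ.deg mu = m ∧ Λ.src mu = v) :
    Λ.ConnectsIn (p + m) := by
  intro u v hu hv
  obtain ⟨mu, hmu_deg, hmu_src⟩ := hsurj v hv
  obtain ⟨lam, hlam_deg, hlam_rng, hlam_src⟩ := hp u (Λ.rng mu) hu (Λ.deg_rng mu)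
  exact ⟨Λ.comp lam mu hlam_src, by rw [Λ.deg_comp, hlam_deg, hmu_deg],
    (Λ.rng_comp _ _ _).trans hlam_rng, (Λ.src_comp _ _ _).trans hmu_src⟩

theorem ConnectsIn.mono {p q : Fin k → ℕ} (hp : Λ.ConnectsIn p) (hpq : p ≤ q)
    (hsurj : ∀ v, Λ.IsVertex v → ∃ mu, Λ.deg mu = q - p ∧ Λ.src mu = v) :
    Λ.ConnectsIn q :=
  add_tsub_cancel_of_le hpq ▸ hp.add hsurj

end KGraph

theorem primitive_consequences_general {k : ℕ} (Λ : KGraph k)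
    (hstar : Λ.Star) (hprim : Λ.Primitive) :
    {v : Λ.Mor | Λ.IsVertex v}.Finite ∧
    ∃ N : Fin k → ℕ, ∀ p : Fin k → ℕ, N ≤ p →
      ∀ u v, Λ.IsVertex u → Λ.IsVertex v →
        ∃ lam, Λ.deg lam = p ∧ Λ.rng lam = u ∧ Λ.src lam = v := by
  obtain ⟨N, -, hN⟩ := hprim
  have hconn : Λ.ConnectsIn N := hN
  exact ⟨KGraph.finite_setOf_isVertex_of_connectsIn hconn fun u hu => ((hstar N).2 u hu).1,
    N, fun p hNp => hconn.mono hNp fun v hv => ((hstar (p - N)).1 v hv).2⟩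

/-- A primitive `k`-graph satisfying (★) has finitely many
vertices, and there is `N ∈ ℕ^k` such that for all `p ≥ N` and all vertices
`u, v` there is `λ ∈ Λ^p` with `r(λ) = u` and `s(λ) = v`. -/
theorem primitive_consequences {k : ℕ} (hk : 0 < k) (Λ : KGraph k)
    (hstar : Λ.Star) (hprim : Λ.Primitive) :
    {v : Λ.Mor | Λ.IsVertex v}.Finite ∧
    ∃ N : Fin k → ℕ, ∀ p : Fin k → ℕ, N ≤ p →
      ∀ u v, Λ.IsVertex u → Λ.IsVertex v →
        ∃ lam, Λ.deg lam = p ∧ Λ.rng lam = u ∧ Λ.src lam = v :=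
  primitive_consequences_general Λ hstar hprim
end

section
/- Let (Λ,d) be a k-graph satisfying the standing assumption (★). Let m ∈ ℕ^k and let x,y ∈ Λ^Δ satisfy x(m,n) = y(m,n) and x(−n,−m) = y(−n,−m) for all n ≥ m; set λ = x(−m,m) and ν = y(−m,m). Then there exists a unique map φ : Z(λ,−m) → Z(ν,−m) such that for every z ∈ Z(λ,−m) and every n ≥ m, φ(z)(m,n) = z(m,n) and φ(z)(−n,−m) = z(−n,−m); moreover φ(x) = y, z ~_a φ(z) for all z ∈ Z(λ,−m), and φ is a homeomorphism of Z(λ,−m) onto Z(ν,−m). -/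
/-!
A two-sided path `x` is determined by its windows `x(-n, n)`, and conversely any family of
morphisms of degree `2n`, each the central segment of all later ones, is the family of windows of a
path: unique factorisation supplies every segment `(a, b)` as a segment of a large enough window.
For `z ∈ Z(λ, -m)` the morphisms `z(-n, -m) ν z(m, n)` form such a family, because `ν` has the
same degree, range and source as `λ = z(-m, m)`; the resulting path `φ(z)` agrees with `z` outside
`(-m, m)` and is the only such path through `ν`. Its window over `[-n, n]` depends only on the
window of `z` over `[-n, n]`, so `φ` is continuous, and splicing `λ` back in is its inverse.
-/

open scoped Classical
open TopologicalSpace MeasureTheory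

namespace KGraph

variable {k : ℕ} (Λ : KGraph k)

/-- Composition made total by the junk value `a` when `s(a) ≠ r(b)`; this lets composites be
rewritten without carrying composability proofs around. -/
noncomputable def cmp (a b : Λ.Mor) : Λ.Mor :=
  if h : Λ.src a = Λ.rng b then Λ.comp a b h else a

/-- `Λ.mid μ p q` is the segment `μ(p, p + q)` of `μ`, meaningful when `p + q ≤ d(μ)`. -/
noncomputable def mid (μ : Λ.Mor) (p q : Fin k → ℕ) : Λ.Mor :=
  @Classical.epsilon _ ⟨μ⟩ fun β => ∃ α γ, Λ.src α = Λ.rng β ∧ Λ.src β = Λ.rng γ ∧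
    Λ.deg α = p ∧ Λ.deg β = q ∧ Λ.cmp (Λ.cmp α β) γ = μ

variable {Λ} {a b c a' b' : Λ.Mor}

theorem comp_eq_cmp (h : Λ.src a = Λ.rng b) : Λ.comp a b h = Λ.cmp a b := (dif_pos h).symm

theorem deg_cmp (h : Λ.src a = Λ.rng b) : Λ.deg (Λ.cmp a b) = Λ.deg a + Λ.deg b := by
  rw [← comp_eq_cmp h, Λ.deg_comp]

theorem src_cmp (h : Λ.src a = Λ.rng b) : Λ.src (Λ.cmp a b) = Λ.src b := by
  rw [← comp_eq_cmp h, Λ.src_comp]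

theorem rng_cmp (h : Λ.src a = Λ.rng b) : Λ.rng (Λ.cmp a b) = Λ.rng a := by
  rw [← comp_eq_cmp h, Λ.rng_comp]

theorem cmp_assoc (hab : Λ.src a = Λ.rng b) (hbc : Λ.src b = Λ.rng c) :
    Λ.cmp (Λ.cmp a b) c = Λ.cmp a (Λ.cmp b c) := by
  have h₁ : Λ.src (Λ.comp a b hab) = Λ.rng c := by rw [Λ.src_comp]; exact hbc
  have h₂ : Λ.src a = Λ.rng (Λ.comp b c hbc) := by rw [Λ.rng_comp]; exact hab
  rw [← comp_eq_cmp hab, ← comp_eq_cmp hbc, ← comp_eq_cmp h₁, ← comp_eq_cmp h₂]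
  exact Λ.assoc a b c hab hbc h₁ h₂

theorem src_rng (a : Λ.Mor) : Λ.src (Λ.rng a) = Λ.rng a := Λ.src_obj _ (Λ.deg_rng a)

theorem rng_rng (a : Λ.Mor) : Λ.rng (Λ.rng a) = Λ.rng a := Λ.rng_obj _ (Λ.deg_rng a)

theorem src_src (a : Λ.Mor) : Λ.src (Λ.src a) = Λ.src a := Λ.src_obj _ (Λ.deg_src a)

theorem rng_src (a : Λ.Mor) : Λ.rng (Λ.src a) = Λ.src a := Λ.rng_obj _ (Λ.deg_src a)

theorem rng_cmp_self (a : Λ.Mor) : Λ.cmp (Λ.rng a) a = a := by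
  rw [← comp_eq_cmp (src_rng a), Λ.id_comp]

theorem cmp_src_self (a : Λ.Mor) : Λ.cmp a (Λ.src a) = a := by
  rw [← comp_eq_cmp (rng_src a).symm, Λ.comp_id]

theorem cmp_cancel (h : Λ.src a = Λ.rng b) (h' : Λ.src a' = Λ.rng b')
    (hd : Λ.deg a = Λ.deg a') (he : Λ.cmp a b = Λ.cmp a' b') : a = a' ∧ b = b' := by
  have hd' : Λ.deg b = Λ.deg b' := by
    have := congrArg Λ.deg he
    rwa [deg_cmp h, deg_cmp h', hd, add_right_inj] at this
  obtain ⟨_, -, huniq⟩ := Λ.factor (Λ.cmp a b) (Λ.deg a) (Λ.deg b) (deg_cmp h)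
  have e := (huniq (a, b) ⟨rfl, rfl, h, comp_eq_cmp h⟩).trans
    (huniq (a', b') ⟨hd.symm, hd'.symm, h', (comp_eq_cmp h').trans he.symm⟩).symm
  exact Prod.ext_iff.mp e

theorem mid_eq {μ : Λ.Mor} {p q : Fin k → ℕ} (hab : Λ.src a = Λ.rng b)
    (hbc : Λ.src b = Λ.rng c) (hp : Λ.deg a = p) (hq : Λ.deg b = q)
    (hμ : Λ.cmp (Λ.cmp a b) c = μ) : Λ.mid μ p q = b := by
  subst hp hq hμ
  obtain ⟨a', c', hab', hbc', ha', hb', he⟩ :=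
    @Classical.epsilon_spec _ (fun β => ∃ α γ, Λ.src α = Λ.rng β ∧ Λ.src β = Λ.rng γ ∧
      Λ.deg α = Λ.deg a ∧ Λ.deg β = Λ.deg b ∧ Λ.cmp (Λ.cmp α β) γ = Λ.cmp (Λ.cmp a b) c)
      ⟨b, a, c, hab, hbc, rfl, rfl, rfl⟩
  have hout := cmp_cancel (by rwa [src_cmp hab']) (by rwa [src_cmp hab])
    (by rw [deg_cmp hab', deg_cmp hab, ha', hb']) he
  exact (cmp_cancel hab' hab ha' hout.1).2

variable {μ : Λ.Mor} {p q r : Fin k → ℕ}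

theorem exists_cmp3 (h : p + q ≤ Λ.deg μ) :
    ∃ α β γ, Λ.src α = Λ.rng β ∧ Λ.src β = Λ.rng γ ∧ Λ.deg α = p ∧ Λ.deg β = q ∧
      Λ.cmp (Λ.cmp α β) γ = μ := by
  obtain ⟨⟨δ, γ⟩, ⟨hδ, -, hδγ, rfl⟩, -⟩ :=
    Λ.factor μ (p + q) (Λ.deg μ - (p + q)) (add_tsub_cancel_of_le h).symm
  obtain ⟨⟨α, β⟩, ⟨hα, hβ, hαβ, rfl⟩, -⟩ := Λ.factor δ p q hδ
  refine ⟨α, β, γ, hαβ, ?_, hα, hβ, by rw [comp_eq_cmp, comp_eq_cmp]⟩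
  rwa [Λ.src_comp] at hδγ

theorem deg_mid (h : p + q ≤ Λ.deg μ) : Λ.deg (Λ.mid μ p q) = q := by
  obtain ⟨α, β, γ, hαβ, hβγ, hα, hβ, hμ⟩ := exists_cmp3 h
  rw [mid_eq hαβ hβγ hα hβ hμ, hβ]

theorem mid_zero_deg (μ : Λ.Mor) : Λ.mid μ 0 (Λ.deg μ) = μ :=
  mid_eq (a := Λ.rng μ) (c := Λ.src μ) (src_rng μ) (rng_src μ).symm (Λ.deg_rng μ) rfl
    (by rw [rng_cmp_self, cmp_src_self])

theorem rng_mid (h : p + q ≤ Λ.deg μ) : Λ.rng (Λ.mid μ p q) = Λ.mid μ p 0 := by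
  obtain ⟨α, β, γ, hαβ, hβγ, hα, hβ, hμ⟩ := exists_cmp3 h
  rw [mid_eq hαβ hβγ hα hβ hμ]
  refine (mid_eq (b := Λ.rng β) (c := Λ.cmp β γ) ?_ ?_ hα (Λ.deg_rng β) ?_).symm
  · rw [rng_rng, hαβ]
  · rw [src_rng, rng_cmp hβγ]
  · rw [← hαβ, cmp_src_self, ← cmp_assoc hαβ hβγ, hμ]

theorem src_mid (h : p + q ≤ Λ.deg μ) : Λ.src (Λ.mid μ p q) = Λ.mid μ (p + q) 0 := by
  obtain ⟨α, β, γ, hαβ, hβγ, hα, hβ, hμ⟩ := exists_cmp3 h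
  rw [mid_eq hαβ hβγ hα hβ hμ]
  refine (mid_eq (a := Λ.cmp α β) (b := Λ.src β) (c := γ) ?_ ?_ ?_ (Λ.deg_src β) ?_).symm
  · rw [rng_src, src_cmp hαβ]
  · rw [src_src, hβγ]
  · rw [deg_cmp hαβ, hα, hβ]
  · rw [← src_cmp hαβ, cmp_src_self, hμ]

theorem mid_mid {p' q' : Fin k → ℕ} (h : p + q ≤ Λ.deg μ) (h' : p' + q' ≤ q) :
    Λ.mid (Λ.mid μ p q) p' q' = Λ.mid μ (p + p') q' := by
  obtain ⟨α, β, γ, hαβ, hβγ, hα, hβ, hμ⟩ := exists_cmp3 h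
  rw [mid_eq hαβ hβγ hα hβ hμ]
  obtain ⟨α', β', γ', hαβ', hβγ', hα', hβ', rfl⟩ := exists_cmp3 (hβ ▸ h')
  rw [mid_eq hαβ' hβγ' hα' hβ' rfl]
  simp only [rng_cmp, src_cmp, hαβ', hβγ'] at hαβ hβγ
  refine (mid_eq (a := Λ.cmp α α') (c := Λ.cmp γ' γ) ?_ ?_ ?_ hβ' ?_).symm
  · rwa [src_cmp hαβ]
  · rwa [rng_cmp hβγ]
  · rw [deg_cmp hαβ, hα, hα']
  · rw [← hμ]
    simp (maxDischargeDepth := 4) only [cmp_assoc, src_cmp, rng_cmp, hαβ, hβγ, hαβ', hβγ']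

theorem cmp_mid (h : p + q + r ≤ Λ.deg μ) :
    Λ.cmp (Λ.mid μ p q) (Λ.mid μ (p + q) r) = Λ.mid μ p (q + r) := by
  obtain ⟨α, β, γ, hαβ, hβγ, hα, hβ, hμ⟩ :=
    exists_cmp3 (p := p) (q := q + r) (by rwa [← add_assoc])
  obtain ⟨⟨β₁, β₂⟩, ⟨hβ₁, hβ₂, hβ₁₂, rfl⟩, -⟩ := Λ.factor β q r hβ
  simp only [comp_eq_cmp] at hβ₁ hβ₂ hβ₁₂ hβ hαβ hβγ hμ ⊢
  rw [mid_eq hαβ hβγ hα hβ hμ]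
  simp only [rng_cmp, src_cmp, hβ₁₂] at hαβ hβγ
  rw [mid_eq (a := α) (c := Λ.cmp β₂ γ) hαβ (by rwa [rng_cmp hβγ]) hα hβ₁ ?_,
    mid_eq (a := Λ.cmp α β₁) (c := γ) (by rwa [src_cmp hαβ]) hβγ
      (by rw [deg_cmp hαβ, hα, hβ₁]) hβ₂ ?_]
  all_goals
    rw [← hμ]
    simp (maxDischargeDepth := 4) only [cmp_assoc, src_cmp, rng_cmp, hαβ, hβγ, hβ₁₂]

theorem mid_cmp_left (h : Λ.src a = Λ.rng b) (hp : Λ.deg a = p) : Λ.mid (Λ.cmp a b) 0 p = a :=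
  mid_eq (src_rng a) h (Λ.deg_rng a) hp (by rw [rng_cmp_self])

theorem mid_cmp_right (h : Λ.src a = Λ.rng b) (hp : Λ.deg a = p) (hq : Λ.deg b = q) :
    Λ.mid (Λ.cmp a b) p q = b :=
  mid_eq h (rng_src b).symm hp hq (by rw [← src_cmp h, cmp_src_self])

variable (Λ) in
def Parallel (μ ν : Λ.Mor) : Prop :=
  Λ.deg μ = Λ.deg ν ∧ Λ.rng μ = Λ.rng ν ∧ Λ.src μ = Λ.src ν

theorem Parallel.symm {μ ν : Λ.Mor} (h : Λ.Parallel μ ν) : Λ.Parallel ν μ :=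
  ⟨h.1.symm, h.2.1.symm, h.2.2.symm⟩

end KGraph

/-- The degree `n - m ∈ ℕ^k` of the morphism `(m, n)` of `Δ` (truncated when `m ≰ n`). -/
def boxDeg {k : ℕ} (m n : Fin k → ℤ) : Fin k → ℕ := fun i => (n i - m i).toNat

section BoxDeg

variable {k : ℕ} {a b c : Fin k → ℤ}

theorem boxDeg_add (hab : a ≤ b) (hbc : b ≤ c) : boxDeg a b + boxDeg b c = boxDeg a c := by
  funext i
  have : a i ≤ b i := hab i
  have : b i ≤ c i := hbc i
  simp only [Pi.add_apply, boxDeg]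
  omega

theorem boxDeg_self (a : Fin k → ℤ) : boxDeg a a = 0 := by
  funext i; simp [boxDeg]

theorem boxDeg_add_add (hab : a ≤ b) (hbc : b ≤ c) {d : Fin k → ℤ} (hcd : c ≤ d) :
    boxDeg a b + boxDeg b c + boxDeg c d = boxDeg a d := by
  rw [boxDeg_add hab hbc, boxDeg_add (hab.trans hbc) hcd]

end BoxDeg

namespace TwoSidedPath

open KGraph

variable {k : ℕ} {Λ : KGraph k} (x : TwoSidedPath Λ) {a b c : Fin k → ℤ}

theorem deg_toFun (hab : a ≤ b) : Λ.deg (x.toFun a b hab) = boxDeg a b := by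
  funext i
  have := x.deg_eq a b hab i
  have : a i ≤ b i := hab i
  simp only [boxDeg]
  omega

theorem src_toFun_eq_rng (hab : a ≤ b) (hbc : b ≤ c) :
    Λ.src (x.toFun a b hab) = Λ.rng (x.toFun b c hbc) :=
  (x.src_eq a b hab).trans (x.rng_eq b c hbc).symm

theorem cmp_toFun (hab : a ≤ b) (hbc : b ≤ c) :
    Λ.cmp (x.toFun a b hab) (x.toFun b c hbc) = x.toFun a c (hab.trans hbc) := by
  rw [← comp_eq_cmp (x.src_toFun_eq_rng hab hbc), x.comp_eq]

theorem toFun_eq_mid {n₀ n₁ : Fin k → ℤ} (h₀ : n₀ ≤ a) (hab : a ≤ b) (h₁ : b ≤ n₁) :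
    x.toFun a b hab =
      Λ.mid (x.toFun n₀ n₁ (h₀.trans (hab.trans h₁))) (boxDeg n₀ a) (boxDeg a b) :=
  (mid_eq (x.src_toFun_eq_rng h₀ hab) (x.src_toFun_eq_rng hab h₁) (x.deg_toFun h₀)
    (x.deg_toFun hab) (by rw [x.cmp_toFun, x.cmp_toFun])).symm

theorem toFun_eq_of_toFun_eq {y : TwoSidedPath Λ} {n₀ n₁ : Fin k → ℤ} (hn : n₀ ≤ n₁)
    (hxy : x.toFun n₀ n₁ hn = y.toFun n₀ n₁ hn) (h₀ : n₀ ≤ a) (hab : a ≤ b) (h₁ : b ≤ n₁) :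
    x.toFun a b hab = y.toFun a b hab := by
  rw [x.toFun_eq_mid h₀ hab h₁, y.toFun_eq_mid h₀ hab h₁, hxy]

theorem ext {y : TwoSidedPath Λ}
    (h : ∀ a b (hab : a ≤ b), x.toFun a b hab = y.toFun a b hab) : x = y := by
  cases x; cases y
  congr 1
  funext a b hab
  exact h a b hab

end TwoSidedPath

theorem neg_le_self_of_coeZ_le {k : ℕ} {m : Fin k → ℕ} {n : Fin k → ℤ} (hn : coeZ m ≤ n) :
    -n ≤ n :=
  (neg_le_neg hn).trans ((neg_coeZ_le m).trans hn)

def windowBound {k : ℕ} (m : Fin k → ℕ) (a b : Fin k → ℤ) : Fin k → ℤ := coeZ m ⊔ (-a ⊔ b)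

section WindowBound

variable {k : ℕ} (m : Fin k → ℕ) (a b : Fin k → ℤ)

theorem coeZ_le_windowBound : coeZ m ≤ windowBound m a b := le_sup_left

theorem neg_windowBound_le : -windowBound m a b ≤ a :=
  neg_le.mp (le_sup_of_le_right le_sup_left)

theorem le_windowBound : b ≤ windowBound m a b := le_sup_of_le_right le_sup_right

end WindowBound

/-- The windows `x(-n, n)`, `n ≥ m`, of a two-sided path `x`, axiomatised; `toPath` rebuilds `x`
from them. -/
structure WindowSystem {k : ℕ} (Λ : KGraph k) (m : Fin k → ℕ) where
  win : ∀ n : Fin k → ℤ, coeZ m ≤ n → Λ.Mor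
  deg_win : ∀ n hn, Λ.deg (win n hn) = boxDeg (-n) n
  mid_win : ∀ n n' (hn : coeZ m ≤ n) (hnn' : n ≤ n'),
    Λ.mid (win n' (hn.trans hnn')) (boxDeg (-n') (-n)) (boxDeg (-n) n) = win n hn

namespace WindowSystem

open KGraph

variable {k : ℕ} {Λ : KGraph k} {m : Fin k → ℕ} (W : WindowSystem Λ m) {a b c n : Fin k → ℤ}

noncomputable def seg (a b : Fin k → ℤ) : Λ.Mor :=
  Λ.mid (W.win (windowBound m a b) (coeZ_le_windowBound m a b))
    (boxDeg (-windowBound m a b) a) (boxDeg a b)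

theorem le_deg_win (hn : coeZ m ≤ n) (hna : -n ≤ a) (hab : a ≤ b) (hbn : b ≤ n) :
    boxDeg (-n) a + boxDeg a b ≤ Λ.deg (W.win n hn) := by
  rw [W.deg_win, ← boxDeg_add_add hna hab hbn]
  exact le_self_add

theorem mid_win_mono {n' : Fin k → ℤ} (hn : coeZ m ≤ n) (hnn' : n ≤ n') (hna : -n ≤ a)
    (hab : a ≤ b) (hbn : b ≤ n) :
    Λ.mid (W.win n' (hn.trans hnn')) (boxDeg (-n') a) (boxDeg a b) =
      Λ.mid (W.win n hn) (boxDeg (-n) a) (boxDeg a b) := by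
  have hn'n : -n' ≤ -n := neg_le_neg hnn'
  rw [← W.mid_win n n' hn hnn', mid_mid, boxDeg_add hn'n hna]
  · exact W.le_deg_win _ hn'n (neg_le_self_of_coeZ_le hn) hnn'
  · rw [← boxDeg_add_add hna hab hbn]
    exact le_self_add

theorem seg_eq (hn : coeZ m ≤ n) (hna : -n ≤ a) (hab : a ≤ b) (hbn : b ≤ n) :
    W.seg a b = Λ.mid (W.win n hn) (boxDeg (-n) a) (boxDeg a b) := by
  have hN := coeZ_le_windowBound m a b
  rw [seg, ← W.mid_win_mono hN (le_sup_right : _ ≤ n ⊔ windowBound m a b)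
      (neg_windowBound_le m a b) hab (le_windowBound m a b),
    ← W.mid_win_mono hn (le_sup_left : _ ≤ n ⊔ windowBound m a b) hna hab hbn]

theorem deg_seg (hab : a ≤ b) : Λ.deg (W.seg a b) = boxDeg a b :=
  deg_mid (W.le_deg_win _ (neg_windowBound_le m a b) hab (le_windowBound m a b))

theorem rng_seg (hab : a ≤ b) : Λ.rng (W.seg a b) = W.seg a a := by
  have hna := neg_windowBound_le m a b
  have hbn := le_windowBound m a b
  rw [W.seg_eq (coeZ_le_windowBound m a b) hna le_rfl (hab.trans hbn), boxDeg_self, seg,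
    rng_mid (W.le_deg_win _ hna hab hbn)]

theorem src_seg (hab : a ≤ b) : Λ.src (W.seg a b) = W.seg b b := by
  have hna := neg_windowBound_le m a b
  have hbn := le_windowBound m a b
  rw [W.seg_eq (coeZ_le_windowBound m a b) (hna.trans hab) le_rfl hbn, boxDeg_self, seg,
    src_mid (W.le_deg_win _ hna hab hbn), boxDeg_add hna hab]

theorem cmp_seg (hab : a ≤ b) (hbc : b ≤ c) : Λ.cmp (W.seg a b) (W.seg b c) = W.seg a c := by
  have hN := coeZ_le_windowBound m a c
  have hna := neg_windowBound_le m a c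
  have hcn := le_windowBound m a c
  rw [W.seg_eq hN hna hab (hbc.trans hcn), W.seg_eq hN (hna.trans hab) hbc hcn,
    W.seg_eq hN hna (hab.trans hbc) hcn, ← boxDeg_add hna hab, cmp_mid, boxDeg_add hab hbc]
  rw [add_assoc, boxDeg_add hab hbc]
  exact W.le_deg_win hN hna (hab.trans hbc) hcn

noncomputable def toPath : TwoSidedPath Λ where
  toFun a b _ := W.seg a b
  deg_eq a b hab i := by
    rw [W.deg_seg hab]
    have : a i ≤ b i := hab i
    simp only [boxDeg]
    omega
  src_eq a b hab := W.src_seg hab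
  rng_eq a b hab := W.rng_seg hab
  comp_eq a b c hab hbc := by rw [comp_eq_cmp]; exact W.cmp_seg hab hbc

theorem toPath_toFun_win (hn : coeZ m ≤ n) :
    W.toPath.toFun (-n) n (neg_le_self_of_coeZ_le hn) = W.win n hn := by
  show W.seg (-n) n = _
  rw [W.seg_eq hn le_rfl (neg_le_self_of_coeZ_le hn) le_rfl, boxDeg_self, ← W.deg_win n hn,
    mid_zero_deg]

end WindowSystem

namespace TwoSidedPath

open KGraph

variable {k : ℕ} {Λ : KGraph k} {m : Fin k → ℕ} {a b c d n : Fin k → ℤ}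

theorem cmp_cmp_toFun (x : TwoSidedPath Λ) (hab : a ≤ b) (hbc : b ≤ c) (hcd : c ≤ d) :
    Λ.cmp (Λ.cmp (x.toFun a b hab) (x.toFun b c hbc)) (x.toFun c d hcd) =
      x.toFun a d (hab.trans (hbc.trans hcd)) := by
  rw [x.cmp_toFun, x.cmp_toFun]

theorem ext_of_toFun_win {x y : TwoSidedPath Λ} (m : Fin k → ℕ)
    (h : ∀ n (hn : coeZ m ≤ n), x.toFun (-n) n (neg_le_self_of_coeZ_le hn) =
      y.toFun (-n) n (neg_le_self_of_coeZ_le hn)) : x = y :=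
  ext x fun a b hab =>
    x.toFun_eq_of_toFun_eq _ (h _ (coeZ_le_windowBound m a b)) (neg_windowBound_le m a b) hab
      (le_windowBound m a b)

theorem mem_ZCyl_toFun_iff (x z : TwoSidedPath Λ) (hab : a ≤ b) :
    z ∈ ZCyl Λ (x.toFun a b hab) a ↔ z.toFun a b hab = x.toFun a b hab := by
  have hb : a + Λ.degZ (x.toFun a b hab) = b := by
    funext i
    have := x.deg_eq a b hab i
    simp only [Pi.add_apply, KGraph.degZ]
    omega
  exact Eq.congr_left (z.toFun_congr rfl hb _ hab)

end TwoSidedPath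

/-- `ARel x y` unfolds to `∃ m, AgreeOutside m x y`. -/
def AgreeOutside {k : ℕ} {Λ : KGraph k} (m : Fin k → ℕ) (x y : TwoSidedPath Λ) : Prop :=
  ∀ n : Fin k → ℤ, coeZ m ≤ n →
    (∀ h : coeZ m ≤ n, x.toFun (coeZ m) n h = y.toFun (coeZ m) n h) ∧
    (∀ h' : -n ≤ -(coeZ m), x.toFun (-n) (-(coeZ m)) h' = y.toFun (-n) (-(coeZ m)) h')

namespace AgreeOutside

variable {k : ℕ} {Λ : KGraph k} {m : Fin k → ℕ} {x y z : TwoSidedPath Λ}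

theorem symm (h : AgreeOutside m x y) : AgreeOutside m y x := fun n hn =>
  ⟨fun h' => ((h n hn).1 h').symm, fun h' => ((h n hn).2 h').symm⟩

theorem trans (h₁ : AgreeOutside m x y) (h₂ : AgreeOutside m y z) : AgreeOutside m x z :=
  fun n hn => ⟨fun h' => ((h₁ n hn).1 h').trans ((h₂ n hn).1 h'),
    fun h' => ((h₁ n hn).2 h').trans ((h₂ n hn).2 h')⟩

theorem parallel (h : AgreeOutside m x y) :
    Λ.Parallel (x.toFun (-coeZ m) (coeZ m) (neg_coeZ_le m))
      (y.toFun (-coeZ m) (coeZ m) (neg_coeZ_le m)) := by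
  refine ⟨by rw [x.deg_toFun, y.deg_toFun], ?_, ?_⟩
  · rw [x.rng_eq, y.rng_eq]; exact (h _ le_rfl).2 le_rfl
  · rw [x.src_eq, y.src_eq]; exact (h _ le_rfl).1 le_rfl

theorem eq (h : AgreeOutside m x y)
    (hmid : x.toFun (-coeZ m) (coeZ m) (neg_coeZ_le m) =
      y.toFun (-coeZ m) (coeZ m) (neg_coeZ_le m)) : x = y := by
  refine TwoSidedPath.ext_of_toFun_win m fun n hn => ?_
  have hnm : -n ≤ -coeZ m := neg_le_neg hn
  rw [← x.cmp_cmp_toFun hnm (neg_coeZ_le m) hn, ← y.cmp_cmp_toFun hnm (neg_coeZ_le m) hn,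
    (h n hn).1 hn, (h n hn).2 hnm, hmid]

end AgreeOutside

namespace TwoSidedPath

open KGraph

variable {k : ℕ} {Λ : KGraph k} (z : TwoSidedPath Λ)

theorem rng_of_parallel {m : Fin k → ℕ} {ν : Λ.Mor}
    (hν : Λ.Parallel (z.toFun (-coeZ m) (coeZ m) (neg_coeZ_le m)) ν) :
    Λ.rng ν = z.toFun (-coeZ m) (-coeZ m) le_rfl := by
  rw [← hν.2.1, z.rng_eq]

theorem src_of_parallel {m : Fin k → ℕ} {ν : Λ.Mor}
    (hν : Λ.Parallel (z.toFun (-coeZ m) (coeZ m) (neg_coeZ_le m)) ν) :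
    Λ.src ν = z.toFun (coeZ m) (coeZ m) le_rfl := by
  rw [← hν.2.2, z.src_eq]

theorem deg_cmp_cmp_toFun {m : Fin k → ℕ} {ν : Λ.Mor} {n : Fin k → ℤ}
    (hν : Λ.Parallel (z.toFun (-coeZ m) (coeZ m) (neg_coeZ_le m)) ν) (hn : coeZ m ≤ n) :
    Λ.deg (Λ.cmp (Λ.cmp (z.toFun (-n) (-coeZ m) (neg_le_neg hn)) ν) (z.toFun (coeZ m) n hn)) =
      boxDeg (-n) n := by
  have hrng := z.rng_of_parallel hν
  have hsrc := z.src_of_parallel hν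
  rw [deg_cmp, deg_cmp, ← hν.1, z.deg_toFun, z.deg_toFun, z.deg_toFun,
    boxDeg_add_add (neg_le_neg hn) (neg_coeZ_le m) hn]
  all_goals simp only [src_cmp, z.src_eq, z.rng_eq, hrng, hsrc]

/-- `z(-n, -m) ν z(m, n)`: the windows of `z` with `z(-m, m)` replaced by `ν`. -/
noncomputable def spliceWindows (m : Fin k → ℕ) (ν : Λ.Mor)
    (hν : Λ.Parallel (z.toFun (-coeZ m) (coeZ m) (neg_coeZ_le m)) ν) : WindowSystem Λ m where
  win n hn := Λ.cmp (Λ.cmp (z.toFun (-n) (-coeZ m) (neg_le_neg hn)) ν) (z.toFun (coeZ m) n hn)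
  deg_win n hn := z.deg_cmp_cmp_toFun hν hn
  mid_win n n' hn hnn' := by
    have hrng := z.rng_of_parallel hν
    have hsrc := z.src_of_parallel hν
    have hn'n : -n' ≤ -n := neg_le_neg hnn'
    refine mid_eq (a := z.toFun (-n') (-n) hn'n) (c := z.toFun n n' hnn') ?_ ?_
      (z.deg_toFun _) (z.deg_cmp_cmp_toFun hν hn) ?_
    · simp only [rng_cmp, src_cmp, z.src_eq, z.rng_eq, hrng, hsrc]
    · simp only [src_cmp, z.src_eq, z.rng_eq, hrng, hsrc]
    · rw [← z.cmp_toFun hn'n (neg_le_neg hn), ← z.cmp_toFun hn hnn']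
      simp (maxDischargeDepth := 4) only [cmp_assoc, rng_cmp, src_cmp, z.src_eq, z.rng_eq,
        hrng, hsrc]

noncomputable def splice (m : Fin k → ℕ) (ν : Λ.Mor)
    (hν : Λ.Parallel (z.toFun (-coeZ m) (coeZ m) (neg_coeZ_le m)) ν) : TwoSidedPath Λ :=
  (z.spliceWindows m ν hν).toPath

variable {m : Fin k → ℕ} {ν : Λ.Mor} {n : Fin k → ℤ}
  (hν : Λ.Parallel (z.toFun (-coeZ m) (coeZ m) (neg_coeZ_le m)) ν)

theorem splice_toFun_win (hn : coeZ m ≤ n) :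
    (z.splice m ν hν).toFun (-n) n (neg_le_self_of_coeZ_le hn) =
      Λ.cmp (Λ.cmp (z.toFun (-n) (-coeZ m) (neg_le_neg hn)) ν) (z.toFun (coeZ m) n hn) :=
  (z.spliceWindows m ν hν).toPath_toFun_win hn

theorem splice_toFun_center :
    (z.splice m ν hν).toFun (-coeZ m) (coeZ m) (neg_coeZ_le m) = ν := by
  rw [z.splice_toFun_win hν le_rfl, ← z.rng_of_parallel hν, rng_cmp_self,
    ← z.src_of_parallel hν, cmp_src_self]

theorem agreeOutside_splice : AgreeOutside m (z.splice m ν hν) z := by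
  intro n hn
  have hrng := z.rng_of_parallel hν
  have hsrc := z.src_of_parallel hν
  have hnm : -n ≤ -coeZ m := neg_le_neg hn
  have hmn : -coeZ m ≤ n := (neg_coeZ_le m).trans hn
  refine ⟨fun _ => ?_, fun _ => ?_⟩
  · rw [toFun_eq_mid _ (hnm.trans (neg_coeZ_le m)) hn le_rfl, z.splice_toFun_win hν hn]
    refine mid_cmp_right ?_ ?_ (z.deg_toFun hn)
    · simp only [src_cmp, z.src_eq, z.rng_eq, hrng, hsrc]
    · rw [deg_cmp, ← hν.1, z.deg_toFun, z.deg_toFun, boxDeg_add hnm (neg_coeZ_le m)]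
      simp only [z.src_eq, hrng]
  · rw [toFun_eq_mid _ le_rfl hnm hmn, z.splice_toFun_win hν hn, boxDeg_self, cmp_assoc]
    · refine mid_cmp_left ?_ (z.deg_toFun hnm)
      simp only [rng_cmp, z.src_eq, z.rng_eq, hrng, hsrc]
    · simp only [z.src_eq, hrng]
    · simp only [z.rng_eq, hsrc]

theorem splice_toFun_win_congr {z' : TwoSidedPath Λ}
    (hν' : Λ.Parallel (z'.toFun (-coeZ m) (coeZ m) (neg_coeZ_le m)) ν) (hn : coeZ m ≤ n)
    (hzz' : z.toFun (-n) n (neg_le_self_of_coeZ_le hn) =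
      z'.toFun (-n) n (neg_le_self_of_coeZ_le hn)) :
    (z.splice m ν hν).toFun (-n) n (neg_le_self_of_coeZ_le hn) =
      (z'.splice m ν hν').toFun (-n) n (neg_le_self_of_coeZ_le hn) := by
  have hnm : -n ≤ -coeZ m := neg_le_neg hn
  have hmn : -coeZ m ≤ n := (neg_coeZ_le m).trans hn
  rw [z.splice_toFun_win hν hn, z'.splice_toFun_win hν' hn,
    z.toFun_eq_of_toFun_eq _ hzz' le_rfl hnm hmn,
    z.toFun_eq_of_toFun_eq _ hzz' (hnm.trans (neg_coeZ_le m)) hn le_rfl]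

end TwoSidedPath

section Topology

open TwoSidedPath

variable {k : ℕ} {Λ : KGraph k}

theorem isOpen_ZCyl (μ : Λ.Mor) (n : Fin k → ℤ) : IsOpen (ZCyl Λ μ n) :=
  TopologicalSpace.isOpen_generateFrom_of_mem ⟨μ, n, rfl⟩

theorem continuous_of_toFun_win_eq {X : Type*} [TopologicalSpace X] {G V : X → TwoSidedPath Λ}
    (hV : Continuous V) (m : Fin k → ℕ)
    (hG : ∀ n (hn : coeZ m ≤ n) x₁ x₂,
      (V x₁).toFun (-n) n (neg_le_self_of_coeZ_le hn) =
        (V x₂).toFun (-n) n (neg_le_self_of_coeZ_le hn) →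
      (G x₁).toFun (-n) n (neg_le_self_of_coeZ_le hn) =
        (G x₂).toFun (-n) n (neg_le_self_of_coeZ_le hn)) :
    Continuous G := by
  refine continuous_generateFrom_iff.mpr ?_
  rintro _ ⟨μ, n₀, rfl⟩
  set n₁ := n₀ + Λ.degZ μ
  set N := windowBound m n₀ n₁
  have hN := coeZ_le_windowBound m n₀ n₁
  refine isOpen_iff_forall_mem_open.mpr fun x₀ hx₀ => ⟨_, fun x hx => ?_,
    (isOpen_ZCyl _ _).preimage hV, (V x₀).self_mem_cyl (-N) N (neg_le_self_of_coeZ_le hN)⟩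
  have hwin := hG N hN x x₀ ((mem_ZCyl_toFun_iff _ _ _).mp hx)
  exact ((G x).toFun_eq_of_toFun_eq _ hwin (neg_windowBound_le m n₀ n₁) (le_add_degZ Λ n₀ μ)
    (le_windowBound m n₀ n₁)).trans hx₀

variable (m : Fin k → ℕ) {x y : TwoSidedPath Λ}

theorem parallel_of_mem_ZCyl {z : TwoSidedPath Λ}
    (h : Λ.Parallel (x.toFun (-coeZ m) (coeZ m) (neg_coeZ_le m))
      (y.toFun (-coeZ m) (coeZ m) (neg_coeZ_le m)))
    (hz : z ∈ ZCyl Λ (x.toFun (-coeZ m) (coeZ m) (neg_coeZ_le m)) (-coeZ m)) :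
    Λ.Parallel (z.toFun (-coeZ m) (coeZ m) (neg_coeZ_le m))
      (y.toFun (-coeZ m) (coeZ m) (neg_coeZ_le m)) := by
  rwa [(mem_ZCyl_toFun_iff _ _ _).mp hz]

variable (h : Λ.Parallel (x.toFun (-coeZ m) (coeZ m) (neg_coeZ_le m))
  (y.toFun (-coeZ m) (coeZ m) (neg_coeZ_le m)))

noncomputable def spliceCyl :
    ZCyl Λ (x.toFun (-coeZ m) (coeZ m) (neg_coeZ_le m)) (-coeZ m) →
      ZCyl Λ (y.toFun (-coeZ m) (coeZ m) (neg_coeZ_le m)) (-coeZ m) := fun z =>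
  ⟨z.1.splice m _ (parallel_of_mem_ZCyl m h z.2),
    (mem_ZCyl_toFun_iff _ _ _).mpr (z.1.splice_toFun_center _)⟩

theorem agreeOutside_spliceCyl (z) : AgreeOutside m (spliceCyl m h z).1 z.1 :=
  z.1.agreeOutside_splice _

theorem eq_of_agreeOutside_of_mem_ZCyl {w w' : TwoSidedPath Λ}
    (hw : w ∈ ZCyl Λ (y.toFun (-coeZ m) (coeZ m) (neg_coeZ_le m)) (-coeZ m))
    (hw' : w' ∈ ZCyl Λ (y.toFun (-coeZ m) (coeZ m) (neg_coeZ_le m)) (-coeZ m))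
    (hww' : AgreeOutside m w w') : w = w' :=
  hww'.eq (((mem_ZCyl_toFun_iff _ _ _).mp hw).trans ((mem_ZCyl_toFun_iff _ _ _).mp hw').symm)

theorem spliceCyl_spliceCyl (z) : spliceCyl m h.symm (spliceCyl m h z) = z :=
  Subtype.ext <| eq_of_agreeOutside_of_mem_ZCyl m (Subtype.property _) z.2 <|
    (agreeOutside_spliceCyl m h.symm _).trans (agreeOutside_spliceCyl m h z)

theorem continuous_spliceCyl : Continuous (spliceCyl m h) :=
  (continuous_of_toFun_win_eq continuous_subtype_val m fun _ hn z _ hzz' =>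
    z.1.splice_toFun_win_congr _ _ hn hzz').subtype_mk _

noncomputable def spliceHomeomorph :
    ZCyl Λ (x.toFun (-coeZ m) (coeZ m) (neg_coeZ_le m)) (-coeZ m) ≃ₜ
      ZCyl Λ (y.toFun (-coeZ m) (coeZ m) (neg_coeZ_le m)) (-coeZ m) where
  toFun := spliceCyl m h
  invFun := spliceCyl m h.symm
  left_inv := spliceCyl_spliceCyl m h
  right_inv := spliceCyl_spliceCyl m h.symm
  continuous_toFun := continuous_spliceCyl m h
  continuous_invFun := continuous_spliceCyl m h.symm

end Topology

theorem asymptotic_local_homeomorphism_general {k : ℕ} (Λ : KGraph k)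
    (m : Fin k → ℕ) (x y : TwoSidedPath Λ)
    (hagree : ∀ n : Fin k → ℤ, coeZ m ≤ n →
      (∀ h : coeZ m ≤ n, x.toFun (coeZ m) n h = y.toFun (coeZ m) n h) ∧
      (∀ h' : -n ≤ -(coeZ m),
        x.toFun (-n) (-(coeZ m)) h' = y.toFun (-n) (-(coeZ m)) h')) :
    ∃ φ : ↥(ZCyl Λ (x.toFun (-(coeZ m)) (coeZ m) (neg_coeZ_le m)) (-(coeZ m))) →
        ↥(ZCyl Λ (y.toFun (-(coeZ m)) (coeZ m) (neg_coeZ_le m)) (-(coeZ m))),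
      (∀ z (n : Fin k → ℤ) (hn : coeZ m ≤ n),
        (∀ h : coeZ m ≤ n,
          (φ z).1.toFun (coeZ m) n h = z.1.toFun (coeZ m) n h) ∧
        (∀ h' : -n ≤ -(coeZ m),
          (φ z).1.toFun (-n) (-(coeZ m)) h' = z.1.toFun (-n) (-(coeZ m)) h')) ∧
      (∀ φ' : ↥(ZCyl Λ (x.toFun (-(coeZ m)) (coeZ m) (neg_coeZ_le m)) (-(coeZ m))) →
          ↥(ZCyl Λ (y.toFun (-(coeZ m)) (coeZ m) (neg_coeZ_le m)) (-(coeZ m))),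
        (∀ z (n : Fin k → ℤ) (hn : coeZ m ≤ n),
          (∀ h : coeZ m ≤ n,
            (φ' z).1.toFun (coeZ m) n h = z.1.toFun (coeZ m) n h) ∧
          (∀ h' : -n ≤ -(coeZ m),
            (φ' z).1.toFun (-n) (-(coeZ m)) h' =
              z.1.toFun (-n) (-(coeZ m)) h')) → φ' = φ) ∧
      φ ⟨x, x.self_mem_cyl (-(coeZ m)) (coeZ m) (neg_coeZ_le m)⟩ =
        ⟨y, y.self_mem_cyl (-(coeZ m)) (coeZ m) (neg_coeZ_le m)⟩ ∧
      (∀ z, ARel z.1 (φ z).1) ∧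
      Continuous φ ∧ Function.Bijective φ ∧ IsOpenMap φ := by
  have hxy : AgreeOutside m x y := hagree
  let φ := spliceHomeomorph m hxy.parallel
  have hφ (z) : AgreeOutside m (φ z).1 z.1 := agreeOutside_spliceCyl m hxy.parallel z
  refine ⟨φ, hφ, fun φ' hφ' => funext fun z => Subtype.ext ?_, Subtype.ext ?_,
    fun z => ⟨m, (hφ z).symm⟩, φ.continuous, φ.bijective, φ.isOpenMap⟩
  · exact eq_of_agreeOutside_of_mem_ZCyl m (φ' z).2 (φ z).2 (AgreeOutside.trans (hφ' z) (hφ z).symm)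
  · exact eq_of_agreeOutside_of_mem_ZCyl m (φ _).2 (y.self_mem_cyl _ _ _) ((hφ _).trans hxy)

/-- Given `m ∈ ℕ^k` and asymptotically equivalent `x, y` agreeing
outside `(-m, m)`, with `λ = x(-m,m)` and `ν = y(-m,m)`, there is a unique map
`φ : Z(λ,-m) → Z(ν,-m)` agreeing with the identity on both tails; it sends
`x` to `y`, satisfies `z ∼ₐ φ(z)`, and is a homeomorphism onto `Z(ν,-m)`. -/
theorem asymptotic_local_homeomorphism {k : ℕ} (hk : 0 < k) (Λ : KGraph k)
    (hstar : Λ.Star) (m : Fin k → ℕ) (x y : TwoSidedPath Λ)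
    (hagree : ∀ n : Fin k → ℤ, coeZ m ≤ n →
      (∀ h : coeZ m ≤ n, x.toFun (coeZ m) n h = y.toFun (coeZ m) n h) ∧
      (∀ h' : -n ≤ -(coeZ m),
        x.toFun (-n) (-(coeZ m)) h' = y.toFun (-n) (-(coeZ m)) h')) :
    ∃ φ : ↥(ZCyl Λ (x.toFun (-(coeZ m)) (coeZ m) (neg_coeZ_le m)) (-(coeZ m))) →
        ↥(ZCyl Λ (y.toFun (-(coeZ m)) (coeZ m) (neg_coeZ_le m)) (-(coeZ m))),
      (∀ z (n : Fin k → ℤ) (hn : coeZ m ≤ n),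
        (∀ h : coeZ m ≤ n,
          (φ z).1.toFun (coeZ m) n h = z.1.toFun (coeZ m) n h) ∧
        (∀ h' : -n ≤ -(coeZ m),
          (φ z).1.toFun (-n) (-(coeZ m)) h' = z.1.toFun (-n) (-(coeZ m)) h')) ∧
      (∀ φ' : ↥(ZCyl Λ (x.toFun (-(coeZ m)) (coeZ m) (neg_coeZ_le m)) (-(coeZ m))) →
          ↥(ZCyl Λ (y.toFun (-(coeZ m)) (coeZ m) (neg_coeZ_le m)) (-(coeZ m))),
        (∀ z (n : Fin k → ℤ) (hn : coeZ m ≤ n),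
          (∀ h : coeZ m ≤ n,
            (φ' z).1.toFun (coeZ m) n h = z.1.toFun (coeZ m) n h) ∧
          (∀ h' : -n ≤ -(coeZ m),
            (φ' z).1.toFun (-n) (-(coeZ m)) h' =
              z.1.toFun (-n) (-(coeZ m)) h')) → φ' = φ) ∧
      φ ⟨x, x.self_mem_cyl (-(coeZ m)) (coeZ m) (neg_coeZ_le m)⟩ =
        ⟨y, y.self_mem_cyl (-(coeZ m)) (coeZ m) (neg_coeZ_le m)⟩ ∧
      (∀ z, ARel z.1 (φ z).1) ∧
      Continuous φ ∧ Function.Bijective φ ∧ IsOpenMap φ :=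
  asymptotic_local_homeomorphism_general Λ m x y hagree
end
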